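/- Let w(z) := sech(πz/4) and let h : ℝ → ℂ be differentiable at every point with h ∈ L²(ℝ) and h' ∈ L²(ℝ). Then ∫_ℝ w(z)·[ h'(z) + (π/4)·tanh(πz/4)·h(z) + (π/4)·w(z)·∫_ℝ w'(s)·h(s) ds ] dz = 0; that is, ⟨w, D₀h⟩ = 0 for every h in H¹(ℝ). -/

import Mathlib

open Real MeasureTheory

/-- The weight `w(z) = sech(πz/4)`. -/
noncomputable def w (z : ℝ) : ℝ := 1 / Real.cosh (π * z / 4)

/-!
Since `w' = -(π/4) tanh(πz/4) w`, the integrand is `w h' - w' h + (π/4) w² ⟨w', h⟩`.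
Integration by parts (legitimate because `w` and `h` are both in `H¹`) gives
`∫ w h' = -⟨w', h⟩`, and `(π/4) ∫ w² = 2` because `(4/π) tanh(πz/4)` is an antiderivative
of `w²` running from `-4/π` to `4/π`. The three contributions are `-1`, `-1` and `2`
times `⟨w', h⟩`.
-/

open Filter Topology

theorem integrable_deriv_of_nonneg_of_tendsto {g g' : ℝ → ℝ} {m n : ℝ}
    (hderiv : ∀ x, HasDerivAt g (g' x) x) (hg' : ∀ x, 0 ≤ g' x)
    (hbot : Tendsto g atBot (𝓝 m)) (htop : Tendsto g atTop (𝓝 n)) : Integrable g' := by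
  have hint (a b : ℝ) : IntervalIntegrable g' volume a b :=
    intervalIntegral.intervalIntegrable_deriv_of_nonneg
      (fun x _ => (hderiv x).continuousAt.continuousWithinAt) (fun x _ => hderiv x)
      (fun x _ => hg' x)
  refine (aecover_Ioc tendsto_neg_atTop_atBot tendsto_id)
    |>.integrable_of_integral_tendsto_of_nonneg_ae (n - m) (fun i => (hint (-i) i).1)
      (ae_of_all _ hg') ?_
  refine (htop.sub (hbot.comp tendsto_neg_atTop_atBot)).congr' ?_
  filter_upwards [eventually_ge_atTop 0] with i hi
  rw [id, ← intervalIntegral.integral_of_le (neg_le_self hi),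
    intervalIntegral.integral_eq_sub_of_hasDerivAt (fun x _ => hderiv x) (hint _ _)]
  rfl

theorem integral_mul_deriv_eq_neg_of_memLp {A : Type*} [NormedRing A] [NormedAlgebra ℝ A]
    {u u' v v' : ℝ → A} (hu : ∀ x, HasDerivAt u (u' x) x) (hv : ∀ x, HasDerivAt v (v' x) x)
    (hu2 : MemLp u 2) (hu'2 : MemLp u' 2) (hv2 : MemLp v 2) (hv'2 : MemLp v' 2) :
    ∫ x, u x * v' x = -∫ x, u' x * v x :=
  integral_mul_deriv_eq_deriv_mul_of_integrable (fun x _ => hu x) (fun x _ => hv x)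
    (hu2.integrable_mul hv'2) (hu'2.integrable_mul hv2) (hu2.integrable_mul hv2)

namespace Real

theorem tanh_eq_one_sub (x : ℝ) : tanh x = 1 - 2 / (exp (2 * x) + 1) := by
  rw [tanh_eq, exp_neg, show 2 * x = x + x by ring, exp_add]
  field_simp
  ring

theorem tendsto_tanh_atTop : Tendsto tanh atTop (𝓝 1) := by
  have h : Tendsto (fun x => exp (2 * x) + 1) atTop atTop :=
    tendsto_atTop_add_const_right _ _
      (tendsto_exp_atTop.comp (tendsto_id.const_mul_atTop two_pos))
  simpa [← tanh_eq_one_sub] using (tendsto_const_nhds (x := (2 : ℝ))).div_atTop h |>.const_sub 1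

theorem tendsto_tanh_atBot : Tendsto tanh atBot (𝓝 (-1)) := by
  simpa [Function.comp_def] using (tendsto_tanh_atTop.comp tendsto_neg_atBot_atTop).neg

theorem hasDerivAt_tanh (x : ℝ) : HasDerivAt tanh (1 / cosh x ^ 2) x := by
  have h := (hasDerivAt_sinh x).div (hasDerivAt_cosh x) (cosh_pos x).ne'
  rw [show tanh = fun y => sinh y / cosh y from funext fun y => tanh_eq_sinh_div_cosh y]
  refine h.congr_deriv ?_
  rw [← cosh_sq_sub_sinh_sq x]
  ring

end Real

lemma hasDerivAt_pi_mul_div_four (z : ℝ) : HasDerivAt (fun z : ℝ => π * z / 4) (π / 4) z := by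
  simpa using ((hasDerivAt_id z).const_mul π).div_const 4

lemma hasDerivAt_w (z : ℝ) : HasDerivAt w (-(π / 4 * tanh (π * z / 4)) * w z) z := by
  have h := ((hasDerivAt_cosh _).comp z (hasDerivAt_pi_mul_div_four z)).inv
    (cosh_pos (π * z / 4)).ne'
  rw [show w = (cosh ∘ fun z => π * z / 4)⁻¹ from funext fun z => one_div _]
  refine h.congr_deriv ?_
  simp only [tanh_eq_sinh_div_cosh, Function.comp_apply, Pi.inv_apply]
  field_simp

lemma deriv_w (z : ℝ) : deriv w z = -(π / 4 * tanh (π * z / 4)) * w z :=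
  (hasDerivAt_w z).deriv

noncomputable def wSqAntideriv (z : ℝ) : ℝ := 4 / π * tanh (π * z / 4)

lemma hasDerivAt_wSqAntideriv (z : ℝ) : HasDerivAt wSqAntideriv (w z ^ 2) z := by
  have h := ((hasDerivAt_tanh _).comp z (hasDerivAt_pi_mul_div_four z)).const_mul (4 / π)
  refine h.congr_deriv ?_
  simp only [w]
  field_simp

lemma tendsto_wSqAntideriv_atTop : Tendsto wSqAntideriv atTop (𝓝 (4 / π)) := by
  have h : Tendsto (fun z : ℝ => π * z / 4) atTop atTop :=
    (tendsto_id.const_mul_atTop pi_pos).atTop_div_const (by norm_num)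
  unfold wSqAntideriv
  simpa using (tendsto_tanh_atTop.comp h).const_mul (4 / π)

lemma tendsto_wSqAntideriv_atBot : Tendsto wSqAntideriv atBot (𝓝 (-(4 / π))) := by
  have h : Tendsto (fun z : ℝ => π * z / 4) atBot atBot :=
    (tendsto_id.const_mul_atBot pi_pos).atBot_div_const (by norm_num)
  unfold wSqAntideriv
  simpa using (tendsto_tanh_atBot.comp h).const_mul (4 / π)

lemma integrable_w_sq : Integrable (fun z => w z ^ 2) :=
  integrable_deriv_of_nonneg_of_tendsto hasDerivAt_wSqAntideriv (fun _ => sq_nonneg _)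
    tendsto_wSqAntideriv_atBot tendsto_wSqAntideriv_atTop

lemma integral_pi_div_four_mul_w_sq : ∫ z, π / 4 * w z ^ 2 = 2 := by
  rw [integral_const_mul, integral_of_hasDerivAt_of_tendsto hasDerivAt_wSqAntideriv
    integrable_w_sq tendsto_wSqAntideriv_atBot tendsto_wSqAntideriv_atTop]
  field_simp
  ring

lemma continuous_w : Continuous w :=
  continuous_const.div (continuous_cosh.comp (by fun_prop)) fun _ => (cosh_pos _).ne'

lemma memLp_w : MemLp w 2 :=
  (memLp_two_iff_integrable_sq continuous_w.aestronglyMeasurable).2 integrable_w_sq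

lemma memLp_deriv_w : MemLp (deriv w) 2 := by
  refine memLp_w.of_le_mul (c := π / 4) (measurable_deriv w).aestronglyMeasurable
    (ae_of_all _ fun z => ?_)
  have hπ : 0 ≤ π / 4 := by positivity
  rw [deriv_w, norm_mul, norm_neg, norm_mul, Real.norm_of_nonneg hπ]
  gcongr
  exact mul_le_of_le_one_right hπ (abs_tanh_lt_one _).le

/-- The range of the operator `D₀h = h' + (π/4)tanh(πz/4)h + (π/4)w⟨w',h⟩` on
`H¹(ℝ)` is `L²`-orthogonal to `w`: `⟨w, D₀h⟩ = 0` for every `h ∈ H¹(ℝ)`. -/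
theorem range_orthogonal_to_w (h : ℝ → ℂ)
    (hdiff : ∀ z : ℝ, DifferentiableAt ℝ h z)
    (h2 : MemLp h 2 volume) (h'2 : MemLp (deriv h) 2 volume) :
    (∫ z : ℝ, (w z : ℂ) * (deriv h z
        + ((π / 4 * Real.tanh (π * z / 4) : ℝ) : ℂ) * h z
        + ((π / 4 * w z : ℝ) : ℂ) * ∫ s : ℝ, ((deriv w s : ℝ) : ℂ) * h s)) = 0 := by
  set C := ∫ s : ℝ, ((deriv w s : ℝ) : ℂ) * h s
  have hw : MemLp (fun z => (w z : ℂ)) 2 volume := memLp_w.ofReal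
  have hw' : MemLp (fun z => ((deriv w z : ℝ) : ℂ)) 2 volume := memLp_deriv_w.ofReal
  have hwh' : Integrable (fun z => (w z : ℂ) * deriv h z) := hw.integrable_mul h'2
  have hw'h : Integrable (fun z => ((deriv w z : ℝ) : ℂ) * h z) := hw'.integrable_mul h2
  have hmass : Integrable (fun z => ((π / 4 * w z ^ 2 : ℝ) : ℂ) * C) :=
    (integrable_w_sq.const_mul _).ofReal.mul_const _
  have by_parts : ∫ z, (w z : ℂ) * deriv h z = -C :=
    integral_mul_deriv_eq_neg_of_memLp
      (fun z => (hasDerivAt_w z).differentiableAt.hasDerivAt.ofReal_comp)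
      (fun z => (hdiff z).hasDerivAt) hw hw' h2 h'2
  have integrand (z : ℝ) : (w z : ℂ) * (deriv h z
        + ((π / 4 * Real.tanh (π * z / 4) : ℝ) : ℂ) * h z + ((π / 4 * w z : ℝ) : ℂ) * C) =
      ((w z : ℂ) * deriv h z - ((deriv w z : ℝ) : ℂ) * h z)
        + ((π / 4 * w z ^ 2 : ℝ) : ℂ) * C := by
    rw [deriv_w]; push_cast; ring
  simp_rw [integrand]
  rw [integral_add (hwh'.sub' hw'h) hmass, integral_sub hwh' hw'h, by_parts,
    integral_mul_const, integral_complex_ofReal, integral_pi_div_four_mul_w_sq]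
  push_cast
  ring
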